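/- Let T be a finite tree with |V(T)| ≥ 2 and let l be a leaf of T with l distinct from the unique center. If u is the unique center of T, then u is also a center of the tree T \ l obtained by deleting l. -/

import Mathlib

open SimpleGraph

/-- A leaf of a graph is a vertex of degree one. -/
def IsLeaf {V : Type*} (G : SimpleGraph V) (l : V) : Prop :=
  (G.neighborSet l).ncard = 1

/-- `eccent G v` is `d_T(v)`: the maximum over `u ∈ V \ {v}` of `dist(v, u)`. -/
noncomputable def eccent {V : Type*} [Fintype V] [DecidableEq V]
    (G : SimpleGraph V) (v : V) : ℕ :=
  (Finset.univ.erase v).sup (fun u => G.dist v u)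

/-- `v` is a center of `G` if it minimizes the eccentricity `d_T`. -/
def IsCenter {V : Type*} [Fintype V] [DecidableEq V] (G : SimpleGraph V) (v : V) : Prop :=
  ∀ u : V, _root_.eccent G v ≤ _root_.eccent G u

/-!
Deleting a leaf `l` changes no distance between the remaining vertices, because a path through
`l` would enter and leave it along two different edges. Hence every eccentricity drops by at
most one (only the distance to `l` is lost, and `l` is one step beyond its neighbour). The
unique center `u` has eccentricity strictly below every other vertex, so after the deletion it
still has eccentricity at most that of every other vertex.
-/

namespace SimpleGraph

variable {V : Type*} {G : SimpleGraph V}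

theorem dist_le_dist_induce {s : Set V} {x y : s} (h : (G.induce s).Reachable x y) :
    G.dist x y ≤ (G.induce s).dist x y := by
  obtain ⟨q, hq⟩ := h.exists_walk_length_eq_dist
  calc G.dist x y ≤ (q.map (Embedding.induce s).toHom).length := G.dist_le _
    _ = (G.induce s).dist x y := by rw [Walk.length_map, hq]

theorem dist_induce_eq_of_walk {s : Set V} {x y : s} (p : G.Walk x y)
    (hp : p.length = G.dist x y) (hps : ∀ z ∈ p.support, z ∈ s) :
    (G.induce s).dist x y = G.dist x y := by
  have hlen : (p.induce s hps).length = p.length :=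
    (Walk.length_map _ _).symm.trans (congrArg Walk.length (p.map_induce hps))
  refine le_antisymm ?_ (dist_le_dist_induce ⟨p.induce s hps⟩)
  simpa [hlen, hp] using (G.induce s).dist_le (p.induce s hps)

end SimpleGraph

namespace IsLeaf

variable {V : Type*} {G : SimpleGraph V} {l : V}

theorem exists_adj (hl : IsLeaf G l) : ∃ n, G.Adj l n := by
  obtain ⟨n, hn⟩ := Set.ncard_eq_one.mp hl
  exact ⟨n, (hn ▸ rfl : n ∈ G.neighborSet l)⟩

theorem notMem_support_of_isPath (hl : IsLeaf G l) {x y : V} {p : G.Walk x y}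
    (hp : p.IsPath) (hx : x ≠ l) (hy : y ≠ l) : l ∉ p.support := by
  intro hmem
  obtain ⟨i, rfl, hi⟩ := Walk.mem_support_iff_exists_getVert.mp hmem
  have hi0 : i ≠ 0 := by rintro rfl; exact hx p.getVert_zero.symm
  have hilen : i < p.length := hi.lt_of_ne (by rintro rfl; exact hy p.getVert_length.symm)
  have hdeg : (G.neighborSet (p.getVert i)).ncard = 1 := hl
  have hle := Set.ncard_le_ncard (p.toSubgraph.neighborSet_subset (p.getVert i))
    (Set.finite_of_ncard_ne_zero (by omega))
  rw [hp.ncard_neighborSet_toSubgraph_internal_eq_two hi0 hilen, hdeg] at hle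
  omega

theorem dist_induce_eq (hl : IsLeaf G l) {x y : V} (hxy : G.Reachable x y) (hx : x ≠ l)
    (hy : y ≠ l) : (G.induce {v | v ≠ l}).dist ⟨x, hx⟩ ⟨y, hy⟩ = G.dist x y := by
  obtain ⟨p, hp, hlen⟩ := hxy.exists_path_of_dist
  refine dist_induce_eq_of_walk (s := {v | v ≠ l}) (x := ⟨x, hx⟩) (y := ⟨y, hy⟩) p hlen ?_
  rintro z hz rfl
  exact hl.notMem_support_of_isPath hp hx hy hz

end IsLeaf

section Eccentricity

variable {V : Type*} [Fintype V] [DecidableEq V] {G : SimpleGraph V}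

theorem dist_le_eccent (G : SimpleGraph V) (v w : V) : G.dist v w ≤ _root_.eccent G v := by
  rcases eq_or_ne w v with rfl | hwv
  · simp
  · exact Finset.le_sup (f := fun u => G.dist v u) (by simp [hwv])

theorem eccent_le_of_forall_dist_le {v : V} {k : ℕ} (h : ∀ w, G.dist v w ≤ k) :
    _root_.eccent G v ≤ k :=
  Finset.sup_le fun w _ => h w

theorem IsLeaf.eccent_induce_le {l v : V} (hl : IsLeaf G l) (hG : G.Preconnected) (hv : v ≠ l) :
    _root_.eccent (G.induce {x | x ≠ l}) ⟨v, hv⟩ ≤ _root_.eccent G v :=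
  eccent_le_of_forall_dist_le fun ⟨w, hw⟩ => by
    rw [hl.dist_induce_eq (hG v w) hv hw]
    exact dist_le_eccent G v w

theorem IsLeaf.eccent_le_eccent_induce_add_one {l v : V} (hl : IsLeaf G l)
    (hG : G.Preconnected) (hv : v ≠ l) :
    _root_.eccent G v ≤ _root_.eccent (G.induce {x | x ≠ l}) ⟨v, hv⟩ + 1 := by
  have hdist_le (w : V) (hw : w ≠ l) :
      G.dist v w ≤ _root_.eccent (G.induce {x | x ≠ l}) ⟨v, hv⟩ := by
    rw [← hl.dist_induce_eq (hG v w) hv hw]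
    exact dist_le_eccent _ _ _
  refine eccent_le_of_forall_dist_le fun w => ?_
  rcases eq_or_ne w l with rfl | hw
  · obtain ⟨n, hwn⟩ := hl.exists_adj
    calc G.dist v w ≤ G.dist v n + G.dist n w := hwn.symm.reachable.dist_triangle_right v
      _ ≤ _root_.eccent (G.induce {x | x ≠ w}) ⟨v, hv⟩ + 1 := by
        rw [dist_eq_one_iff_adj.mpr hwn.symm]
        exact Nat.add_le_add_right (hdist_le n hwn.ne.symm) 1
  · exact (hdist_le w hw).trans (Nat.le_succ _)

end Eccentricity

theorem stmt_7_general {V : Type*} [Fintype V] [DecidableEq V] (G : SimpleGraph V)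
    (hT : G.IsTree)
    (l u : V) (hl : IsLeaf G l) (hlu : l ≠ u)
    (hu : IsCenter G u) (huniq : ∀ w : V, IsCenter G w → w = u) :
    IsCenter (G.induce {x : V | x ≠ l}) ⟨u, hlu.symm⟩ := by
  have hG := hT.connected.preconnected
  rintro ⟨v, hv⟩
  rcases eq_or_ne v u with rfl | hvu
  · exact le_rfl
  obtain ⟨w, hw⟩ : ∃ w, _root_.eccent G w < _root_.eccent G v := by
    simpa [IsCenter] using mt (huniq v) hvu
  have hu_drop := hl.eccent_induce_le hG hlu.symm
  have hv_drop := hl.eccent_le_eccent_induce_add_one hG hv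
  have huw := hu w
  omega

/-- If `u` is the unique center of a finite tree `T` with at least two vertices and `l ≠ u`
is a leaf of `T`, then `u` is also a center of the tree `T \ l` obtained by deleting `l`. -/
theorem stmt_7 {V : Type*} [Fintype V] [DecidableEq V] (G : SimpleGraph V)
    (hT : G.IsTree) (h2 : 2 ≤ Fintype.card V)
    (l u : V) (hl : IsLeaf G l) (hlu : l ≠ u)
    (hu : IsCenter G u) (huniq : ∀ w : V, IsCenter G w → w = u) :
    IsCenter (G.induce {x : V | x ≠ l}) ⟨u, hlu.symm⟩ :=
  stmt_7_general G hT l u hl hlu hu huniq
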